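/- Let m ≥ 2, N ≥ 1, G = GL(m, ℝ), H = {h ∈ G : h e₁ = e₁}. For ξ, η ∈ gl(m, ℝ) define r̂(ξ ⊗ η) := Σ_{i>j} ξ_{ji} η_{ij} + ½ Σ_r ξ_{rr} η_{rr} and r̂(ξ ∧ η) := ½(r̂(ξ ⊗ η) − r̂(η ⊗ ξ)). For differentiable F : G^N → ℝ define gradients ∇_s F(A), ∇'_s F(A) ∈ gl(m, ℝ) by (d/dε)|₀ F(… e^{εξ} A_s …) = tr(∇_s F · ξ) and (d/dε)|₀ F(… A_s e^{εξ} …) = tr(∇'_s F · ξ), and define the twisted bracket {F, G}(A) := Σ_s r̂(∇_s F ∧ ∇_s G) + Σ_s r̂(∇'_s F ∧ ∇'_s G) − Σ_s r̂(∇'_{s+1} F ⊗ ∇_s G) + Σ_s r̂(∇'_{s+1} G ⊗ ∇_s F), with cyclic index s ∈ ℤ/N. Suppose F and G are invariant under the right gauge action of H^N: F((h_{s+1} A_s h_s^{−1})_s) = F(A) for all h ∈ H^N, and likewise for G. Let A = (A_s)_s where A_s is the companion matrix whose first m−1 columns are e₂, …, e_m and last column is (a⁰_s, …, a^{m−1}_s)ᵀ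 with a⁰_s ≠ 0. Then {F, G}(A) = ⟨∇F − 𝒯∇'F, ∇G⟩(A) − ½ ⟨∇F − 𝒯∇'F, ∇G − 𝒯∇'G⟩(A), where ⟨X, Y⟩ := Σ_{s∈ℤ/N} tr(X_s Y_s) and (𝒯X)_s := X_{s+1}. -/

import Mathlib

/-
At a tuple of companion matrices `A_s` (invertible, since `a⁰_s ≠ 0`) the right gradient is
conjugate to the left one, `∇'_s F = A_s⁻¹ ∇_s F A_s`, so `tr(∇'_s F ∇'_s G) = tr(∇_s F ∇_s G)`.
Differentiating the `H^N`-gauge invariance along the curves `1 + t E_{kl}` (`l ≠ 0`) in `H`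
shows that `∇_s F - ∇'_{s+1} F` vanishes outside the first row. On matrices supported in the
first row `r̂` is symmetric, and `r̂(ξ ⊗ η) + r̂(η ⊗ ξ) = tr(ξη)`; with these two identities each
summand of the twisted bracket equals the corresponding summand of the claimed expression plus
`½ (tr(∇'_{s+1} F ∇'_{s+1} G) - tr(∇_s F ∇_s G))`, and these corrections cancel after the
shift `s ↦ s + 1`.
-/

noncomputable section

/-- `m × m` real matrices, as plain functions (so that the product normed space
structure of `Fin m → Fin m → ℝ` is available). -/
abbrev Mat (m : ℕ) : Type := Fin m → Fin m → ℝ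

/-- Matrix product. -/
def mmul {m : ℕ} (X Y : Mat m) : Mat m := fun i j => ∑ k, X i k * Y k j

/-- Matrix trace. -/
def mtrace {m : ℕ} (X : Mat m) : ℝ := ∑ i, X i i

/-- Identity matrix. -/
def midm (m : ℕ) : Mat m := fun i j => if i = j then 1 else 0

/-- Matrix-vector product. -/
def mvec {m : ℕ} (X : Mat m) (v : Fin m → ℝ) : Fin m → ℝ := fun i => ∑ j, X i j * v j

/-- The first standard basis vector `e₁` of `ℝ^m`. -/
def e1vec (m : ℕ) : Fin m → ℝ := fun i => if (i : ℕ) = 0 then 1 else 0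

/-- The companion-type matrix `A(a)` whose first `m−1` columns are `e₂, …, e_m` and whose
last column is `(a⁰, a¹, …, a^{m−1})ᵀ`. -/
def Amat {m : ℕ} (a : Fin m → ℝ) : Mat m := fun i j =>
  if (j : ℕ) = m - 1 then a i else if (i : ℕ) = (j : ℕ) + 1 then 1 else 0

/-- The pairing of the standard `r`-matrix
`r̂ = Σ_{i>j} E_{ij} ⊗ E_{ji} + ½ Σ_r E_{rr} ⊗ E_{rr}` of `gl(m)` against `ξ ⊗ η`:
`r̂(ξ ⊗ η) = Σ_{i>j} ξ_{ji} η_{ij} + ½ Σ_r ξ_{rr} η_{rr}`. -/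
def rhatT {m : ℕ} (ξ η : Mat m) : ℝ :=
  (∑ i : Fin m, ∑ j : Fin m, if j < i then ξ j i * η i j else 0)
    + (1 / 2) * ∑ r : Fin m, ξ r r * η r r

/-- `r̂(ξ ∧ η) = ½(r̂(ξ ⊗ η) − r̂(η ⊗ ξ))`. -/
def rhatW {m : ℕ} (ξ η : Mat m) : ℝ := (rhatT ξ η - rhatT η ξ) / 2

open Matrix

section MatrixAlgebra

variable {m : ℕ}

lemma mtrace_mmul_sub_left (X X' Y : Mat m) :
    mtrace (mmul (X - X') Y) = mtrace (mmul X Y) - mtrace (mmul X' Y) := by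
  simp only [mtrace, mmul, Pi.sub_apply, sub_mul, Finset.sum_sub_distrib]

lemma mtrace_mmul_sub_right (X Y Y' : Mat m) :
    mtrace (mmul X (Y - Y')) = mtrace (mmul X Y) - mtrace (mmul X Y') := by
  simp only [mtrace, mmul, Pi.sub_apply, mul_sub, Finset.sum_sub_distrib]

lemma mtrace_mmul_single (X : Mat m) (i j : Fin m) :
    mtrace (mmul X (single j i 1)) = X i j := by
  change trace (of X * single j i 1) = X i j
  simp [trace_mul_single]

lemma mmul_midm_add_smul {X : Mat m} {δ : ℝ} (hX : mmul X X = δ • X) (t u : ℝ) :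
    mmul (midm m + t • X) (midm m + u • X) = midm m + (t + u + δ * t * u) • X := by
  change (1 + t • of X) * (1 + u • of X) = 1 + (t + u + δ * t * u) • of X
  have hX' : of X * of X = δ • of X := hX
  simp only [add_mul, mul_add, one_mul, mul_one, smul_mul_smul_comm, hX', smul_smul]
  module

lemma mmul_midm_add_smul_mmul (X B Y : Mat m) (t u : ℝ) :
    mmul (midm m + t • X) (mmul B (midm m + u • Y))
      = B + t • mmul X B + u • mmul B Y + (t * u) • mmul X (mmul B Y) := by
  change (1 + t • of X) * (of B * (1 + u • of Y))
    = of B + t • (of X * of B) + u • (of B * of Y) + (t * u) • (of X * (of B * of Y))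
  simp only [add_mul, mul_add, one_mul, mul_one, smul_mul_assoc, mul_smul_comm]
  module

end MatrixAlgebra

section Rhat

variable {m : ℕ}

lemma rhatT_sub_left (X X' Y : Mat m) : rhatT (X - X') Y = rhatT X Y - rhatT X' Y := by
  simp only [rhatT, ← Finset.sum_filter, Pi.sub_apply, sub_mul, Finset.sum_sub_distrib]
  ring

lemma rhatT_sub_right (X Y Y' : Mat m) : rhatT X (Y - Y') = rhatT X Y - rhatT X Y' := by
  simp only [rhatT, ← Finset.sum_filter, Pi.sub_apply, mul_sub, Finset.sum_sub_distrib]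
  ring

lemma rhatT_add_rhatT_swap (X Y : Mat m) : rhatT X Y + rhatT Y X = mtrace (mmul X Y) := by
  have hsplit : ∀ i j : Fin m, X i j * Y j i =
      (if i < j then X i j * Y j i else 0) + (if j < i then Y j i * X i j else 0)
        + if i = j then X i j * Y j i else 0 := by
    intro i j
    rcases lt_trichotomy i j with h | rfl | h
    · simp [h, h.ne, h.not_gt]
    · simp
    · simp [h, h.ne', h.not_gt, mul_comm]
  have htr : mtrace (mmul X Y) = ∑ i, ∑ j, X i j * Y j i := rfl
  rw [htr, Finset.sum_congr rfl fun i _ => Finset.sum_congr rfl fun j _ => hsplit i j]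
  simp only [rhatT, Finset.sum_add_distrib, Finset.sum_ite_eq, Finset.mem_univ, if_true]
  rw [Finset.sum_comm (f := fun i j => if i < j then X i j * Y j i else 0)]
  simp only [mul_comm (Y _ _)]
  ring

def IsFirstRowSupported [NeZero m] (D : Mat m) : Prop := ∀ i j, i ≠ 0 → D i j = 0

lemma rhatT_comm_of_isFirstRowSupported [NeZero m] {D E : Mat m}
    (hD : IsFirstRowSupported D) (hE : IsFirstRowSupported E) : rhatT D E = rhatT E D := by
  have hstrict : ∀ P Q : Mat m, IsFirstRowSupported Q →
      (∑ i, ∑ j, if j < i then P j i * Q i j else 0) = 0 := fun P Q hQ =>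
    Finset.sum_eq_zero fun i _ => Finset.sum_eq_zero fun j _ => by
      split_ifs with h
      · rw [hQ i j (Fin.pos_iff_ne_zero.mp (lt_of_le_of_lt (Fin.zero_le j) h)), mul_zero]
      · rfl
  rw [rhatT, rhatT, hstrict D E hE, hstrict E D hD]
  simp only [mul_comm (D _ _)]

lemma twisted_bracket_summand_eq [NeZero m] {X X' Y Y' : Mat m}
    (hX : IsFirstRowSupported (X - X')) (hY : IsFirstRowSupported (Y - Y')) :
    rhatW X Y + rhatW X' Y' - rhatT X' Y + rhatT Y' X
      = mtrace (mmul (X - X') Y) - 1 / 2 * mtrace (mmul (X - X') (Y - Y'))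
        + 1 / 2 * (mtrace (mmul X' Y') - mtrace (mmul X Y)) := by
  have hcomm := rhatT_comm_of_isFirstRowSupported hX hY
  simp only [rhatT_sub_left, rhatT_sub_right] at hcomm
  have := rhatT_add_rhatT_swap X Y
  have := rhatT_add_rhatT_swap X' Y'
  have := rhatT_add_rhatT_swap X' Y
  have := rhatT_add_rhatT_swap X Y'
  simp only [rhatW, mtrace_mmul_sub_left, mtrace_mmul_sub_right]
  linarith

end Rhat

section Conjugation

variable {n R : Type*} [Fintype n] [DecidableEq n] [CommRing R]

lemma Matrix.eq_mul_mul_of_trace_mul {A B gl gr : Matrix n n R} (hBA : B * A = 1)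
    (φ : Matrix n n R → R) (hl : ∀ ξ, φ (ξ * A) = trace (gl * ξ))
    (hr : ∀ ξ, φ (A * ξ) = trace (gr * ξ)) : gr = B * gl * A := by
  refine ext_iff_trace_mul_right.mpr fun ξ => ?_
  calc trace (gr * ξ) = φ (A * ξ * B * A) := by rw [← hr, mul_assoc _ B, hBA, mul_one]
    _ = trace (B * gl * A * ξ) := by
      rw [hl]
      simp only [mul_assoc]
      rw [trace_mul_comm B]
      simp only [mul_assoc]

lemma Matrix.trace_mul_eq_of_trace_mul {A : Matrix n n R} (hA : IsUnit A)
    {gl gr gl' gr' : Matrix n n R} (φ φ' : Matrix n n R → R)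
    (hl : ∀ ξ, φ (ξ * A) = trace (gl * ξ)) (hr : ∀ ξ, φ (A * ξ) = trace (gr * ξ))
    (hl' : ∀ ξ, φ' (ξ * A) = trace (gl' * ξ)) (hr' : ∀ ξ, φ' (A * ξ) = trace (gr' * ξ)) :
    trace (gr * gr') = trace (gl * gl') := by
  obtain ⟨B, hBA, hAB⟩ : ∃ B, B * A = 1 ∧ A * B = 1 :=
    ⟨A⁻¹, nonsing_inv_mul A ((isUnit_iff_isUnit_det A).mp hA),
      mul_nonsing_inv A ((isUnit_iff_isUnit_det A).mp hA)⟩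
  rw [eq_mul_mul_of_trace_mul hBA φ hl hr, eq_mul_mul_of_trace_mul hBA φ' hl' hr']
  calc trace (B * gl * A * (B * gl' * A)) = trace (B * (gl * (A * B) * gl') * A) := by
        simp only [mul_assoc]
    _ = trace (gl * gl') := by
        rw [hAB, mul_one, trace_mul_comm, ← mul_assoc, hAB, one_mul]

end Conjugation

section Companion

variable {m : ℕ} [NeZero m]

lemma eq_zero_of_mulVec_Amat_eq_zero {a : Fin m → ℝ} (ha : a 0 ≠ 0) {v : Fin m → ℝ}
    (hv : of (Amat a) *ᵥ v = 0) : v = 0 := by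
  have hm : 0 < m := Nat.pos_of_neZero m
  set last : Fin m := ⟨m - 1, by omega⟩
  have hrow : ∀ i, ∑ k : Fin m,
      (if (k : ℕ) = m - 1 then a i * v k else if (i : ℕ) = k + 1 then v k else 0) = 0 := by
    intro i
    simpa only [mulVec, dotProduct, of_apply, Amat, ite_mul, one_mul, zero_mul,
      Pi.zero_apply] using congrFun hv i
  have hlast : v last = 0 := by
    have := hrow 0
    rw [Finset.sum_eq_single last] at this
    · simpa [last, ha] using this
    · intro k _ hk
      have : (k : ℕ) ≠ m - 1 := fun h => hk (Fin.ext h)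
      simp [this]
    · simp
  funext j
  by_cases hj : (j : ℕ) = m - 1
  · rw [show j = last from Fin.ext hj, hlast]; rfl
  · have := hrow ⟨j + 1, by omega⟩
    rw [Finset.sum_eq_single j] at this
    · simpa [hj] using this
    · intro k _ hk
      split_ifs with h1 h2
      · simp [show k = last from Fin.ext h1, hlast]
      · exact absurd (Fin.ext (by simp at h2; omega)) hk
      · rfl
    · simp

lemma isUnit_Amat {a : Fin m → ℝ} (ha : a 0 ≠ 0) : IsUnit (of (Amat a)) := by
  rw [← mulVec_injective_iff_isUnit]
  intro v w hvw
  rw [← sub_eq_zero]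
  exact eq_zero_of_mulVec_Amat_eq_zero ha (by rw [mulVec_sub, hvw, sub_self])

end Companion

lemma HasDerivAt.fderiv_apply_eq_zero_of_eventually_eq {E : Type*} [NormedAddCommGroup E]
    [NormedSpace ℝ E] {f : E → ℝ} {c : ℝ → E} {v : E} (hc : HasDerivAt c v 0)
    (hf : DifferentiableAt ℝ f (c 0)) (hconst : ∀ᶠ t in nhds 0, f (c t) = f (c 0)) :
    fderiv ℝ f (c 0) v = 0 :=
  (hf.hasFDerivAt.comp_hasDerivAt 0 hc).unique
    ((hasDerivAt_const 0 (f (c 0))).congr_of_eventuallyEq hconst)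

section Gauge

variable {m N : ℕ}

def IsGaugeInvariant (F : (ZMod N → Mat m) → ℝ) : Prop :=
  ∀ h hi : ZMod N → Mat m,
    (∀ s, mmul (h s) (hi s) = midm m ∧ mmul (hi s) (h s) = midm m) →
    (∀ s, mvec (h s) (e1vec m) = e1vec m) →
    ∀ B : ZMod N → Mat m, F (fun s => mmul (h (s + 1)) (mmul (B s) (hi s))) = F B

variable [NeZero N]

/-- Since `Ξ_u² = δ Ξ_u`, the matrix `1 + t Ξ_u` has the explicit inverse
`1 - t / (1 + δ t) Ξ_u`; this gives a curve in the gauge orbit of `A` with velocity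
`Ξ_{u+1} A_u - A_u Ξ_u`. -/
lemma IsGaugeInvariant.fderiv_apply_eq_zero {F : (ZMod N → Mat m) → ℝ}
    (hF : IsGaugeInvariant F) {A : ZMod N → Mat m} (hFA : DifferentiableAt ℝ F A) {Ξ : ZMod N → Mat m} {δ : ℝ}
    (hsq : ∀ u, mmul (Ξ u) (Ξ u) = δ • Ξ u) (hfix : ∀ u, mvec (Ξ u) (e1vec m) = 0) :
    fderiv ℝ F A (fun u => mmul (Ξ (u + 1)) (A u) - mmul (A u) (Ξ u)) = 0 := by
  set ψ : ℝ → ℝ := fun t => -t / (1 + δ * t)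
  set P : ZMod N → Mat m := fun u => mmul (Ξ (u + 1)) (A u)
  set Q : ZMod N → Mat m := fun u => mmul (A u) (Ξ u)
  set R : ZMod N → Mat m := fun u => mmul (Ξ (u + 1)) (mmul (A u) (Ξ u))
  set c : ℝ → ZMod N → Mat m := fun t => A + t • P + ψ t • Q + (t * ψ t) • R
  have hψ0 : ψ 0 = 0 := by simp [ψ]
  have hψ : HasDerivAt ψ (-1) 0 :=
    ((hasDerivAt_id (0 : ℝ)).neg.div (((hasDerivAt_id (0 : ℝ)).const_mul δ).const_add 1)
      (by simp)).congr_deriv (by simp)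
  have hc : HasDerivAt c (P - Q) 0 :=
    ((((hasDerivAt_const 0 A).add ((hasDerivAt_id' 0).smul_const P)).add (hψ.smul_const Q)).add
      (((hasDerivAt_id' 0).mul hψ).smul_const R)).congr_deriv (by simp [hψ0, sub_eq_add_neg])
  have hc0 : c 0 = A := by simp [c, hψ0]
  have hinv : ∀ t, 1 + δ * t ≠ 0 → F (c t) = F A := by
    intro t ht
    have hψt : t + ψ t + δ * t * ψ t = 0 := by
      linear_combination div_mul_cancel₀ (-t) ht
    refine Eq.trans ?_ (hF (fun u => midm m + t • Ξ u) (fun u => midm m + ψ t • Ξ u)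
      (fun u => ⟨?_, ?_⟩) (fun u => ?_) A)
    · congr 1; funext u
      exact (mmul_midm_add_smul_mmul _ _ _ _ _).symm
    · rw [mmul_midm_add_smul (hsq u), hψt, zero_smul, add_zero]
    · rw [mmul_midm_add_smul (hsq u), show ψ t + t + δ * ψ t * t = 0 by linear_combination hψt,
        zero_smul, add_zero]
    · change (1 + t • of (Ξ u)) *ᵥ e1vec m = e1vec m
      have hfix' : of (Ξ u) *ᵥ e1vec m = 0 := hfix u
      rw [add_mulVec, one_mulVec, smul_mulVec, hfix', smul_zero, add_zero]
  have hconst : ∀ᶠ t in nhds 0, F (c t) = F (c 0) := by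
    have hcont : Continuous fun t : ℝ => 1 + δ * t := by fun_prop
    rw [hc0]
    filter_upwards [hcont.continuousAt.eventually_ne (show (1 : ℝ) + δ * 0 ≠ 0 by simp)]
      with t ht using hinv t ht
  have key := hc.fderiv_apply_eq_zero_of_eventually_eq (hc0 ▸ hFA) hconst
  rwa [hc0] at key

variable [NeZero m]

lemma IsGaugeInvariant.isFirstRowSupported_sub {F : (ZMod N → Mat m) → ℝ}
    (hF : IsGaugeInvariant F) {A : ZMod N → Mat m} (hFA : DifferentiableAt ℝ F A)
    {gl gr : ZMod N → Mat m}
    (hgl : ∀ s ξ, fderiv ℝ F A (Pi.single s (mmul ξ (A s))) = mtrace (mmul (gl s) ξ))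
    (hgr : ∀ s ξ, fderiv ℝ F A (Pi.single s (mmul (A s) ξ)) = mtrace (mmul (gr s) ξ))
    (s : ZMod N) : IsFirstRowSupported (gl s - gr (s + 1)) := by
  intro i j hi
  let E : Mat m := single j i 1
  have hsq : mmul E E = (if i = j then 1 else 0 : ℝ) • E := by
    change single j i (1 : ℝ) * single j i 1 = (if i = j then 1 else 0 : ℝ) • single j i 1
    split_ifs with h
    · subst h; simp
    · simp [h]
  have hfix : mvec E (e1vec m) = 0 := by
    change single j i (1 : ℝ) *ᵥ e1vec m = 0
    simp [single_mulVec, e1vec, Fin.val_ne_zero_iff.mpr hi]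
  have hmmul_zero : ∀ X : Mat m, mmul 0 X = 0 ∧ mmul X 0 = 0 := fun X => by
    constructor <;> funext <;> simp [mmul]
  have hmvec_zero : mvec (0 : Mat m) (e1vec m) = 0 := by funext; simp [mvec]
  let Ξ : ZMod N → Mat m := Pi.single (s + 1) E
  have hdir : (fun u => mmul (Ξ (u + 1)) (A u) - mmul (A u) (Ξ u))
      = Pi.single s (mmul E (A s)) - Pi.single (s + 1) (mmul (A (s + 1)) E) := by
    funext u
    simp only [Ξ, Pi.single_apply, add_left_inj, Pi.sub_apply]
    split_ifs <;> simp_all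
  have h0 := hF.fderiv_apply_eq_zero hFA (Ξ := Ξ) (δ := if i = j then 1 else 0)
    (fun u => by by_cases hu : u = s + 1 <;> simp [Ξ, hu, hsq, hmmul_zero])
    (fun u => by by_cases hu : u = s + 1 <;> simp [Ξ, hu, hfix, hmvec_zero])
  rw [hdir, map_sub, hgl, hgr, mtrace_mmul_single, mtrace_mmul_single] at h0
  exact h0

end Gauge

theorem stmt17_general (m N : ℕ) [NeZero m] [NeZero N]
    (F G : (ZMod N → Mat m) → ℝ) (hF : Differentiable ℝ F) (hG : Differentiable ℝ G)
    (hinvF : ∀ h hi : ZMod N → Mat m,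
      (∀ s, mmul (h s) (hi s) = midm m ∧ mmul (hi s) (h s) = midm m) →
      (∀ s, mvec (h s) (e1vec m) = e1vec m) →
      ∀ B : ZMod N → Mat m, F (fun s => mmul (h (s + 1)) (mmul (B s) (hi s))) = F B)
    (hinvG : ∀ h hi : ZMod N → Mat m,
      (∀ s, mmul (h s) (hi s) = midm m ∧ mmul (hi s) (h s) = midm m) →
      (∀ s, mvec (h s) (e1vec m) = e1vec m) →
      ∀ B : ZMod N → Mat m, G (fun s => mmul (h (s + 1)) (mmul (B s) (hi s))) = G B)
    -- the point: a tuple of companion matrices with nonvanishing `a⁰`: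
    (a : Fin m → ZMod N → ℝ) (ha : ∀ s, a 0 s ≠ 0)
    (A : ZMod N → Mat m) (hAdef : ∀ s, A s = Amat (fun r => a r s))
    -- the left and right gradients of `F` and `G` at `A`:
    (gLF gRF gLG gRG : ZMod N → Mat m)
    (hgLF : ∀ (s : ZMod N) (ξ : Mat m),
      fderiv ℝ F A (Pi.single s (mmul ξ (A s))) = mtrace (mmul (gLF s) ξ))
    (hgRF : ∀ (s : ZMod N) (ξ : Mat m),
      fderiv ℝ F A (Pi.single s (mmul (A s) ξ)) = mtrace (mmul (gRF s) ξ))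
    (hgLG : ∀ (s : ZMod N) (ξ : Mat m),
      fderiv ℝ G A (Pi.single s (mmul ξ (A s))) = mtrace (mmul (gLG s) ξ))
    (hgRG : ∀ (s : ZMod N) (ξ : Mat m),
      fderiv ℝ G A (Pi.single s (mmul (A s) ξ)) = mtrace (mmul (gRG s) ξ)) :
    -- the twisted bracket equals the reduced expression:
    (∑ s : ZMod N, rhatW (gLF s) (gLG s)) + (∑ s : ZMod N, rhatW (gRF s) (gRG s))
      - (∑ s : ZMod N, rhatT (gRF (s + 1)) (gLG s))
      + (∑ s : ZMod N, rhatT (gRG (s + 1)) (gLF s))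
    = (∑ s : ZMod N, mtrace (mmul (gLF s - gRF (s + 1)) (gLG s)))
      - (1 / 2) * ∑ s : ZMod N,
          mtrace (mmul (gLF s - gRF (s + 1)) (gLG s - gRG (s + 1))) := by
  have htrace : ∀ s, mtrace (mmul (gRF s) (gRG s)) = mtrace (mmul (gLF s) (gLG s)) := fun s =>
    Matrix.trace_mul_eq_of_trace_mul (by rw [hAdef s]; exact isUnit_Amat (ha s))
      (gl := of (gLF s)) (gr := of (gRF s)) (gl' := of (gLG s)) (gr' := of (gRG s))
      (fun X => fderiv ℝ F A (Pi.single s X)) (fun X => fderiv ℝ G A (Pi.single s X))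
      (hgLF s) (hgRF s) (hgLG s) (hgRG s)
  have hsuppF := IsGaugeInvariant.isFirstRowSupported_sub (F := F) hinvF (hF A) hgLF hgRF
  have hsuppG := IsGaugeInvariant.isFirstRowSupported_sub (F := G) hinvG (hG A) hgLG hgRG
  have hshift : ∀ f : ZMod N → ℝ, ∑ s, f (s + 1) = ∑ s, f s :=
    Equiv.sum_comp (Equiv.addRight 1)
  calc _ = ∑ s, (rhatW (gLF s) (gLG s) + rhatW (gRF (s + 1)) (gRG (s + 1))
          - rhatT (gRF (s + 1)) (gLG s) + rhatT (gRG (s + 1)) (gLF s)) := by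
        rw [← hshift (fun s => rhatW (gRF s) (gRG s))]
        simp only [Finset.sum_add_distrib, Finset.sum_sub_distrib]
    _ = ∑ s, (mtrace (mmul (gLF s - gRF (s + 1)) (gLG s))
          - 1 / 2 * mtrace (mmul (gLF s - gRF (s + 1)) (gLG s - gRG (s + 1)))
          + 1 / 2 * (mtrace (mmul (gRF (s + 1)) (gRG (s + 1))) - mtrace (mmul (gLF s) (gLG s)))) :=
        Finset.sum_congr rfl fun s _ => twisted_bracket_summand_eq (hsuppF s) (hsuppG s)
    _ = _ := by
        rw [Finset.sum_add_distrib, Finset.sum_sub_distrib, ← Finset.mul_sum, ← Finset.mul_sum,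
          Finset.sum_sub_distrib, hshift (fun s => mtrace (mmul (gRF s) (gRG s))),
          Finset.sum_congr rfl fun s _ => htrace s]
        ring

/-- On companion matrices, the twisted (Semenov-Tian-Shansky) bracket of
two `H^N`-gauge-invariant functions `F`, `G` reduces to
`{F,G}(A) = ⟨∇F − 𝒯∇'F, ∇G⟩ − ½⟨∇F − 𝒯∇'F, ∇G − 𝒯∇'G⟩`. -/
theorem stmt17 (m N : ℕ) [NeZero m] [NeZero N] (hm : 2 ≤ m)
    (F G : (ZMod N → Mat m) → ℝ) (hF : Differentiable ℝ F) (hG : Differentiable ℝ G)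
    (hinvF : ∀ h hi : ZMod N → Mat m,
      (∀ s, mmul (h s) (hi s) = midm m ∧ mmul (hi s) (h s) = midm m) →
      (∀ s, mvec (h s) (e1vec m) = e1vec m) →
      ∀ B : ZMod N → Mat m, F (fun s => mmul (h (s + 1)) (mmul (B s) (hi s))) = F B)
    (hinvG : ∀ h hi : ZMod N → Mat m,
      (∀ s, mmul (h s) (hi s) = midm m ∧ mmul (hi s) (h s) = midm m) →
      (∀ s, mvec (h s) (e1vec m) = e1vec m) →
      ∀ B : ZMod N → Mat m, G (fun s => mmul (h (s + 1)) (mmul (B s) (hi s))) = G B)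
    -- the point: a tuple of companion matrices with nonvanishing `a⁰`:
    (a : Fin m → ZMod N → ℝ) (ha : ∀ s, a 0 s ≠ 0)
    (A : ZMod N → Mat m) (hAdef : ∀ s, A s = Amat (fun r => a r s))
    -- the left and right gradients of `F` and `G` at `A`:
    (gLF gRF gLG gRG : ZMod N → Mat m)
    (hgLF : ∀ (s : ZMod N) (ξ : Mat m),
      fderiv ℝ F A (Pi.single s (mmul ξ (A s))) = mtrace (mmul (gLF s) ξ))
    (hgRF : ∀ (s : ZMod N) (ξ : Mat m),
      fderiv ℝ F A (Pi.single s (mmul (A s) ξ)) = mtrace (mmul (gRF s) ξ))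
    (hgLG : ∀ (s : ZMod N) (ξ : Mat m),
      fderiv ℝ G A (Pi.single s (mmul ξ (A s))) = mtrace (mmul (gLG s) ξ))
    (hgRG : ∀ (s : ZMod N) (ξ : Mat m),
      fderiv ℝ G A (Pi.single s (mmul (A s) ξ)) = mtrace (mmul (gRG s) ξ)) :
    -- the twisted bracket equals the reduced expression:
    (∑ s : ZMod N, rhatW (gLF s) (gLG s)) + (∑ s : ZMod N, rhatW (gRF s) (gRG s))
      - (∑ s : ZMod N, rhatT (gRF (s + 1)) (gLG s))
      + (∑ s : ZMod N, rhatT (gRG (s + 1)) (gLF s))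
    = (∑ s : ZMod N, mtrace (mmul (gLF s - gRF (s + 1)) (gLG s)))
      - (1 / 2) * ∑ s : ZMod N,
          mtrace (mmul (gLF s - gRF (s + 1)) (gLG s - gRG (s + 1))) :=
  stmt17_general m N F G hF hG hinvF hinvG a ha A hAdef gLF gRF gLG gRG hgLF hgRF hgLG hgRG
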